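/- Let R be a Noetherian one-dimensional local domain and M a finitely generated torsion-free-rank-one R-module. If J is an ideal of R that is a surjective image of M, then tr_R(J) = tr_R(M). -/

import Mathlib

set_option synthInstance.maxHeartbeats 1000000
set_option maxHeartbeats 1000000

open IsLocalRing

/-- The length of an `R`-module `M`, defined as the Krull dimension of its lattice of
submodules (the supremum of lengths of strict chains of submodules), valued in `ℕ∞`. -/
noncomputable def rlength (R M : Type*) [Ring R] [AddCommGroup M] [Module R M] : ℕ∞ :=
  (Order.krullDim (Submodule R M)).unbotD 0

/-- The trace ideal of `M`: the sum of the images of all homomorphisms `M → R`. -/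
noncomputable def traceIdeal (R M : Type*) [CommRing R] [AddCommGroup M] [Module R M] :
    Ideal R :=
  ⨆ f : M →ₗ[R] R, LinearMap.range f

/-!
The kernel of `M ↠ J` is torsion: after tensoring with the fraction field `K` the map becomes a
nonzero `K`-linear map out of a one-dimensional space, hence injective. Every functional `M → R`
kills torsion, so it factors through `J`; conversely every functional on `J` pulls back to `M`.
So `M` and `J` have the same images of functionals.
-/

open Module Submodule LinearMap TensorProduct

section TraceIdeal

variable {R M N : Type*} [CommRing R] [AddCommGroup M] [Module R M] [AddCommGroup N] [Module R N]

lemma range_le_traceIdeal (g : M →ₗ[R] R) : range g ≤ traceIdeal R M :=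
  le_iSup (fun h : M →ₗ[R] R => range h) g

lemma traceIdeal_le_of_surjective {p : M →ₗ[R] N} (hp : Function.Surjective p) :
    traceIdeal R N ≤ traceIdeal R M :=
  iSup_le fun g => by
    simpa only [range_comp_of_range_eq_top g (range_eq_top.mpr hp)] using
      range_le_traceIdeal (g ∘ₗ p)

lemma traceIdeal_le_of_surjective_of_ker_le {p : M →ₗ[R] N} (hp : Function.Surjective p)
    (hker : ∀ g : M →ₗ[R] R, ker p ≤ ker g) : traceIdeal R M ≤ traceIdeal R N :=
  iSup_le fun g => by
    let g' : N →ₗ[R] R :=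
      (ker p).liftQ g (hker g) ∘ₗ (p.quotKerEquivOfSurjective hp).symm.toLinearMap
    have hg' : range g' = range g := by
      rw [range_comp, LinearEquiv.range, Submodule.map_top, range_liftQ]
    exact hg' ▸ range_le_traceIdeal g'

lemma torsion_le_ker [IsTorsionFree R N] (g : M →ₗ[R] N) : torsion R M ≤ ker g := by
  rintro x ⟨a, hax : (a : R) • x = 0⟩
  rw [mem_ker, ← (isRegular_iff_mem_nonZeroDivisors.mpr a.2).smul_eq_zero_iff_right, ← map_smul,
    hax, map_zero]

lemma traceIdeal_eq_of_surjective_of_ker_le_torsion {p : M →ₗ[R] N}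
    (hp : Function.Surjective p) (hker : ker p ≤ torsion R M) :
    traceIdeal R N = traceIdeal R M :=
  le_antisymm (traceIdeal_le_of_surjective hp)
    (traceIdeal_le_of_surjective_of_ker_le hp fun g => hker.trans (torsion_le_ker g))

end TraceIdeal

lemma ker_le_torsion_of_finrank_eq_one {R M : Type*} [CommRing R] [IsDomain R] [AddCommGroup M]
    [Module R M] (hrank : finrank (FractionRing R) (FractionRing R ⊗[R] M) = 1)
    {f : M →ₗ[R] R} (hf : f ≠ 0) : ker f ≤ torsion R M := by
  set K := FractionRing R
  let φ : K ⊗[R] M →ₗ[K] K := liftBaseChange K (Algebra.linearMap R K ∘ₗ f)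
  have : IsSimpleModule K (K ⊗[R] M) := isSimpleModule_iff_finrank_eq_one.mpr hrank
  have hφ : Function.Injective φ := by
    refine φ.injective_of_ne_zero fun h0 => hf (LinearMap.ext fun m => ?_)
    simpa [φ] using congr($h0 (1 ⊗ₜ m))
  have : IsLocalizedModule (nonZeroDivisors R) (TensorProduct.mk R K M 1) :=
    (isLocalizedModule_iff_isBaseChange _ K _).mpr (TensorProduct.isBaseChange R M K)
  intro x hx
  have hx0 : (1 : K) ⊗ₜ[R] x = 0 := hφ (by simp [φ, mem_ker.mp hx])
  exact (IsLocalizedModule.eq_zero_iff (nonZeroDivisors R) (TensorProduct.mk R K M 1)).mp hx0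

theorem stmt10_general (R : Type*) [CommRing R] [IsDomain R]
    (M : Type*) [AddCommGroup M] [Module R M]
    (hrank : Module.finrank (FractionRing R) (TensorProduct R (FractionRing R) M) = 1)
    (J : Ideal R) (hJ : J ≠ ⊥) (f : M →ₗ[R] R) (hf : LinearMap.range f = J) :
    traceIdeal R J = traceIdeal R M := by
  subst hf
  have hf0 : f ≠ 0 := fun h => hJ (by rw [h, range_zero])
  refine traceIdeal_eq_of_surjective_of_ker_le_torsion f.surjective_rangeRestrict ?_
  rw [ker_rangeRestrict]
  exact ker_le_torsion_of_finrank_eq_one hrank hf0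

/-- if `M` is a finitely generated rank-one module over a one-dimensional
Noetherian local domain and the ideal `J` is a surjective image of `M`, then
`tr_R(J) = tr_R(M)`. -/
theorem stmt10 (R : Type*) [CommRing R] [IsDomain R] [IsNoetherianRing R] [IsLocalRing R]
    (hdim : ringKrullDim R = 1)
    (M : Type*) [AddCommGroup M] [Module R M] [Module.Finite R M]
    (hrank : Module.finrank (FractionRing R) (TensorProduct R (FractionRing R) M) = 1)
    (J : Ideal R) (hJ : J ≠ ⊥) (f : M →ₗ[R] R) (hf : LinearMap.range f = J) :
    traceIdeal R J = traceIdeal R M :=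
  stmt10_general R M hrank J hJ f hf
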